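/- arXiv:2305.06730 — 4 statements merged into one kernel-verified Lean document; each statement's English description precedes it below -/
import Mathlib

section
/- The set of (n+2)×(n+2) real matrices of the form [[R, 0, a], [vᵀR, 1, s + (1/2)vᵀa], [0ᵀ, 0, 1]] with R ∈ SO(n), v, a ∈ ℝⁿ, s ∈ ℝ is closed under matrix multiplication; explicitly the product of the elements with data (R₁, v₁, a₁, s₁) and (R₂, v₂, a₂, s₂) has data R₃ = R₁R₂, v₃ = v₁ + R₁v₂, a₃ = a₁ + R₁a₂, s₃ = s₁ + s₂ + (1/2)v₁ᵀR₁a₂ − (1/2)a₁ᵀR₁v₂. -/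
open Matrix

/-- The matrix `[[R, 0, a], [vᵀR, 1, s + (1/2)vᵀa], [0ᵀ, 0, 1]]` realising a Carroll group
element with data `(R, v, a, s)` inside the `(n+2)×(n+2)` matrices. -/
noncomputable def carrollMat {n : ℕ} (R : Matrix (Fin n) (Fin n) ℝ) (v a : Fin n → ℝ) (s : ℝ) :
    Matrix (Fin n ⊕ Fin 2) (Fin n ⊕ Fin 2) ℝ :=
  fun i j =>
    match i, j with
    | .inl i, .inl j => R i j
    | .inl i, .inr j => if j = 1 then a i else 0
    | .inr i, .inl j => if i = 0 then Matrix.vecMul v R j else 0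
    | .inr i, .inr j =>
        if i = 0 then (if j = 0 then 1 else s + (1 / 2) * (v ⬝ᵥ a))
        else (if j = 0 then 0 else 1)

/-!
In block form over `Fin n ⊕ Fin 2` a Carroll matrix is `[[R, (0 | a)], [(vᵀR ; 0), U]]` with `U`
unipotent upper triangular; the off-diagonal blocks have rank one and multiply to `0` in one
order and to the `(0, 1)` entry `v₁ᵀR₁ ⬝ a₂` in the other. Orthogonality of `R₁` enters only
through `(R₁ x)ᵀ R₁ = xᵀ`: it turns the lower-left block into `(v₁ + R₁ v₂)ᵀ R₁ R₂`, and it makes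
`½ (v₁ + R₁ v₂) ⬝ (a₁ + R₁ a₂)` expand to the cocycle that appears in the corner entry.
-/

section OrthogonalMatrix

variable {m α : Type*} [Fintype m] [DecidableEq m] [CommSemiring α] {A : Matrix m m α}

theorem vecMul_mulVec_of_transpose_mul_self (hA : Aᵀ * A = 1) (x : m → α) :
    (A *ᵥ x) ᵥ* A = x := by
  rw [← vecMul_transpose, vecMul_vecMul, hA, vecMul_one]

theorem add_mulVec_dotProduct_add_mulVec (hA : Aᵀ * A = 1) (v₁ v₂ a₁ a₂ : m → α) :
    (v₁ + A *ᵥ v₂) ⬝ᵥ (a₁ + A *ᵥ a₂) =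
      v₁ ⬝ᵥ a₁ + v₂ ⬝ᵥ a₂ + (v₁ ᵥ* A) ⬝ᵥ a₂ + (a₁ ᵥ* A) ⬝ᵥ v₂ := by
  have hvv : (A *ᵥ v₂) ⬝ᵥ (A *ᵥ a₂) = v₂ ⬝ᵥ a₂ := by
    rw [dotProduct_mulVec, vecMul_mulVec_of_transpose_mul_self hA]
  rw [add_dotProduct, dotProduct_add, dotProduct_add, hvv, dotProduct_mulVec,
    dotProduct_comm (A *ᵥ v₂) a₁, dotProduct_mulVec]
  ring

end OrthogonalMatrix

section Blocks

variable {m α : Type*}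

theorem transpose_of_zero_cons_mul_of_cons_zero [NonUnitalNonAssocSemiring α] (a w : m → α) :
    (of ![0, a])ᵀ * of ![w, 0] = 0 := by
  ext i j
  simp [mul_apply, Fin.sum_univ_two]

theorem transpose_of_zero_cons_mul_unitriangular [NonAssocSemiring α] (a : m → α) (c : α) :
    (of ![0, a])ᵀ * !![1, c; 0, 1] = (of ![0, a])ᵀ := by
  ext i j
  fin_cases j <;> simp [mul_apply]

theorem unitriangular_mul_of_cons_zero [NonAssocSemiring α] (c : α) (w : m → α) :
    !![1, c; 0, 1] * of ![w, 0] = of ![w, 0] := by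
  ext i j
  fin_cases i <;> simp [mul_apply]

theorem unitriangular_mul_unitriangular [NonAssocSemiring α] (c d : α) :
    !![1, c; 0, 1] * !![1, d; 0, 1] = !![1, c + d; 0, 1] := by
  simp [add_comm]

variable [Fintype m]

theorem of_cons_zero_mul_transpose_of_zero_cons [NonUnitalNonAssocSemiring α] (w a : m → α) :
    of ![w, 0] * (of ![0, a])ᵀ = !![0, w ⬝ᵥ a; 0, 0] := by
  ext i j
  fin_cases i <;> fin_cases j <;> simp [mul_apply, dotProduct]

theorem mul_transpose_of_zero_cons [NonUnitalNonAssocSemiring α] (A : Matrix m m α)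
    (a : m → α) : A * (of ![0, a])ᵀ = (of ![0, A *ᵥ a])ᵀ := by
  ext i j
  fin_cases j <;> simp [mul_apply, mulVec, dotProduct]

theorem of_cons_zero_mul [NonUnitalNonAssocSemiring α] (w : m → α) (A : Matrix m m α) :
    of ![w, 0] * A = of ![w ᵥ* A, 0] := by
  ext i j
  fin_cases i <;> simp [mul_apply, vecMul, dotProduct]

end Blocks

theorem carrollMat_eq_fromBlocks {n : ℕ} (R : Matrix (Fin n) (Fin n) ℝ) (v a : Fin n → ℝ)
    (s : ℝ) :
    carrollMat R v a s =
      fromBlocks R (of ![0, a])ᵀ (of ![v ᵥ* R, 0]) !![1, s + 1 / 2 * (v ⬝ᵥ a); 0, 1] := by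
  ext (i | i) (j | j)
  · rfl
  · fin_cases j <;> rfl
  · fin_cases i <;> rfl
  · fin_cases i <;> fin_cases j <;> rfl

theorem carrollMat_mul_general {n : ℕ} (R₁ R₂ : Matrix (Fin n) (Fin n) ℝ)
    (hR₁ : R₁ᵀ * R₁ = 1)
    (v₁ v₂ a₁ a₂ : Fin n → ℝ) (s₁ s₂ : ℝ) :
    carrollMat R₁ v₁ a₁ s₁ * carrollMat R₂ v₂ a₂ s₂ =
      carrollMat (R₁ * R₂) (v₁ + R₁ *ᵥ v₂) (a₁ + R₁ *ᵥ a₂)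
        (s₁ + s₂ + (1 / 2) * (Matrix.vecMul v₁ R₁ ⬝ᵥ a₂)
          - (1 / 2) * (Matrix.vecMul a₁ R₁ ⬝ᵥ v₂)) := by
  simp only [carrollMat_eq_fromBlocks, fromBlocks_multiply,
    transpose_of_zero_cons_mul_of_cons_zero, of_cons_zero_mul_transpose_of_zero_cons,
    mul_transpose_of_zero_cons, of_cons_zero_mul, transpose_of_zero_cons_mul_unitriangular,
    unitriangular_mul_of_cons_zero]
  congr 1
  · rw [add_zero]
  · rw [← transpose_add, of_add_of, cons_add_cons, cons_add_cons, zero_add, empty_add_empty,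
      add_comm]
  · rw [vecMul_vecMul, add_vecMul, ← vecMul_vecMul (R₁ *ᵥ v₂),
      vecMul_mulVec_of_transpose_mul_self hR₁, of_add_of, cons_add_cons, cons_add_cons, add_zero, empty_add_empty]
  · rw [unitriangular_mul_unitriangular, add_mulVec_dotProduct_add_mulVec hR₁]
    ext i j
    fin_cases i <;> fin_cases j <;> simp
    ring

/-- The Carroll matrices are closed under multiplication, with the stated group law. -/
theorem carrollMat_mul {n : ℕ} (R₁ R₂ : Matrix (Fin n) (Fin n) ℝ)
    (hR₁ : R₁ᵀ * R₁ = 1) (hdet₁ : R₁.det = 1)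
    (hR₂ : R₂ᵀ * R₂ = 1) (hdet₂ : R₂.det = 1)
    (v₁ v₂ a₁ a₂ : Fin n → ℝ) (s₁ s₂ : ℝ) :
    carrollMat R₁ v₁ a₁ s₁ * carrollMat R₂ v₂ a₂ s₂ =
      carrollMat (R₁ * R₂) (v₁ + R₁ *ᵥ v₂) (a₁ + R₁ *ᵥ a₂)
        (s₁ + s₂ + (1 / 2) * (Matrix.vecMul v₁ R₁ ⬝ᵥ a₂)
          - (1 / 2) * (Matrix.vecMul a₁ R₁ ⬝ᵥ v₂)) :=
  carrollMat_mul_general R₁ R₂ hR₁ v₁ v₂ a₁ a₂ s₁ s₂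
end

section
/- Under the coadjoint action of the Carroll group, the vector E j + p × k transforms by the rotation R: if (j', k', p', E) = Ad*_{(R,v,a,s)}(j, k, p, E), then E j' + p' × k' = R(E j + p × k). Consequently the quartic Casimir W²(α) = ‖E j + p × k‖² is constant on coadjoint orbits. -/
/-! The boost and translation contributions to `E j' + p' × k'` cancel identically, leaving
`E Rj + Rp × Rk`; and a rotation commutes with the cross product, since `(Ax) × (Ay)` is
`adj(Aᵀ) (x × y)` and `adj(Rᵀ) = R` on `SO(3)`. Norms are then preserved by orthogonality. -/

open Matrix

section CrossProduct

variable {K : Type*} [CommRing K]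

theorem mulVec_cross_mulVec (A : Matrix (Fin 3) (Fin 3) K) (x y : Fin 3 → K) :
    (A *ᵥ x) ⨯₃ (A *ᵥ y) = adjugate Aᵀ *ᵥ (x ⨯₃ y) := by
  funext i
  fin_cases i <;>
    simp [cross_apply, mulVec, dotProduct, adjugate_fin_three, Fin.sum_univ_three] <;> ring

theorem adjugate_transpose_eq_self {R : Matrix (Fin 3) (Fin 3) K}
    (hR : Rᵀ * R = 1) (hdet : R.det = 1) : adjugate Rᵀ = R :=
  calc adjugate Rᵀ = adjugate Rᵀ * (Rᵀ * R) := by rw [hR, mul_one]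
    _ = (adjugate Rᵀ * Rᵀ) * R := (mul_assoc _ _ _).symm
    _ = R := by rw [adjugate_mul, det_transpose, hdet, one_smul, one_mul]

theorem mulVec_cross_mulVec_of_rotation {R : Matrix (Fin 3) (Fin 3) K}
    (hR : Rᵀ * R = 1) (hdet : R.det = 1) (x y : Fin 3 → K) :
    (R *ᵥ x) ⨯₃ (R *ᵥ y) = R *ᵥ (x ⨯₃ y) := by
  rw [mulVec_cross_mulVec, adjugate_transpose_eq_self hR hdet]

theorem mulVec_dotProduct_mulVec_of_transpose_mul_self {n : Type*} [Fintype n] [DecidableEq n]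
    {R : Matrix n n K} (hR : Rᵀ * R = 1) (x y : n → K) : (R *ᵥ x) ⬝ᵥ (R *ᵥ y) = x ⬝ᵥ y := by
  rw [dotProduct_mulVec, ← mulVec_transpose, mulVec_mulVec, hR, one_mulVec]

/-- The `E²`-terms cancel, as do the `E v × k`-terms, and `E (a × p + p × a) = 0`. -/
theorem smul_boost_add_cross_translate (E : K) (v a p k : Fin 3 → K) :
    E • (v ⨯₃ k + a ⨯₃ p + E • (v ⨯₃ a)) + (p - E • v) ⨯₃ (k + E • a) = p ⨯₃ k := by
  have hpa : p ⨯₃ a = -(a ⨯₃ p) := (cross_anticomm _ _).symm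
  simp only [map_add, map_sub, _root_.map_smul, LinearMap.sub_apply, LinearMap.smul_apply, hpa]
  module

end CrossProduct

/-- The coadjoint action of the Carroll group element `(R, v, a, s)` on a covector
`α = (j, k, p, E)`:  `j' = Rj + v × Rk + a × Rp + E v × a`, `k' = Rk + Ea`,
`p' = Rp − Ev`, `E' = E`. -/
def coadj (R : Matrix (Fin 3) (Fin 3) ℝ) (v a : Fin 3 → ℝ) (s : ℝ)
    (α : (Fin 3 → ℝ) × (Fin 3 → ℝ) × (Fin 3 → ℝ) × ℝ) :
    (Fin 3 → ℝ) × (Fin 3 → ℝ) × (Fin 3 → ℝ) × ℝ :=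
  ⟨R *ᵥ α.1 + v ⨯₃ (R *ᵥ α.2.1) + a ⨯₃ (R *ᵥ α.2.2.1) + α.2.2.2 • (v ⨯₃ a),
   R *ᵥ α.2.1 + α.2.2.2 • a,
   R *ᵥ α.2.2.1 - α.2.2.2 • v,
   α.2.2.2⟩

theorem coadj_smul_fst_add_cross {R : Matrix (Fin 3) (Fin 3) ℝ}
    (hR : Rᵀ * R = 1) (hdet : R.det = 1) (v a : Fin 3 → ℝ) (s : ℝ)
    (j k p : Fin 3 → ℝ) (E : ℝ) :
    let α' := coadj R v a s (j, k, p, E)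
    E • α'.1 + α'.2.2.1 ⨯₃ α'.2.1 = R *ᵥ (E • j + p ⨯₃ k) := by
  have hboost := smul_boost_add_cross_translate E v a (R *ᵥ p) (R *ᵥ k)
  rw [mulVec_cross_mulVec_of_rotation hR hdet] at hboost
  simp only [coadj, mulVec_add, mulVec_smul, ← hboost]
  module

/-- Under the coadjoint action, `E j + p × k` transforms by the rotation `R`; hence the
quartic Casimir `W² = ‖E j + p × k‖²` is constant on coadjoint orbits. -/
theorem coadj_casimir (R : Matrix (Fin 3) (Fin 3) ℝ)
    (hR : Rᵀ * R = 1) (hdet : R.det = 1) (v a : Fin 3 → ℝ) (s : ℝ)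
    (j k p j' k' p' : Fin 3 → ℝ) (E : ℝ)
    (h : coadj R v a s (j, k, p, E) = (j', k', p', E)) :
    E • j' + p' ⨯₃ k' = R *ᵥ (E • j + p ⨯₃ k) ∧
    (E • j' + p' ⨯₃ k') ⬝ᵥ (E • j' + p' ⨯₃ k') =
      (E • j + p ⨯₃ k) ⬝ᵥ (E • j + p ⨯₃ k) := by
  have hW : E • j' + p' ⨯₃ k' = R *ᵥ (E • j + p ⨯₃ k) := by
    simpa only [h] using coadj_smul_fst_add_cross hR hdet v a s j k p E
  exact ⟨hW, by rw [hW, mulVec_dotProduct_mulVec_of_transpose_mul_self hR]⟩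
end

section
/- If E = 0 and p × k ≠ 0, then for any j ∈ ℝ³ there exist v, a ∈ ℝ³ such that j + a × p + v × k = 0; i.e. generic massless Carroll covectors can be brought to vanishing angular momentum by boosts and translations. -/
/-!
Put `c = p × k`. The triple product expansion gives `|c|² j = (j·c) c + c × (j × c)` and
`j × c = (j·k) p - (j·p) k`, while `c = (-k) × p`. Every term on the right is therefore of the form
`a × p` or `v × k`, and `|c|² ≠ 0` can be divided out.
-/

open Matrix

theorem dotProduct_self_smul_eq_cross_add_cross {R : Type*} [CommRing R] (p k j : Fin 3 → R) :
    ((p ⨯₃ k) ⬝ᵥ (p ⨯₃ k)) • j =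
      ((j ⬝ᵥ k) • (p ⨯₃ k) - (j ⬝ᵥ (p ⨯₃ k)) • k) ⨯₃ p + (-(j ⬝ᵥ p) • (p ⨯₃ k)) ⨯₃ k := by
  set c := p ⨯₃ k
  have hj : (c ⬝ᵥ c) • j = (j ⬝ᵥ c) • c + c ⨯₃ (j ⨯₃ c) := by
    rw [cross_cross_eq_smul_sub_smul', add_sub_cancel]
  have hjc : j ⨯₃ c = (j ⬝ᵥ k) • p - (p ⬝ᵥ j) • k := cross_cross_eq_smul_sub_smul' j p k
  have hkp : k ⨯₃ p = -c := (cross_anticomm p k).symm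
  rw [hj, hjc]
  simp only [map_sub, map_smul, LinearMap.sub_apply, LinearMap.smul_apply, hkp,
    dotProduct_comm p j]
  module

theorem exists_cross_add_cross_eq {K : Type*} [Field K] {p k : Fin 3 → K}
    (h : (p ⨯₃ k) ⬝ᵥ (p ⨯₃ k) ≠ 0) (j : Fin 3 → K) : ∃ a v : Fin 3 → K, a ⨯₃ p + v ⨯₃ k = j := by
  set d := (p ⨯₃ k) ⬝ᵥ (p ⨯₃ k)
  refine ⟨d⁻¹ • ((j ⬝ᵥ k) • (p ⨯₃ k) - (j ⬝ᵥ (p ⨯₃ k)) • k), d⁻¹ • (-(j ⬝ᵥ p) • (p ⨯₃ k)), ?_⟩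
  rw [map_smul, map_smul, LinearMap.smul_apply, LinearMap.smul_apply, ← smul_add,
    ← dotProduct_self_smul_eq_cross_add_cross, inv_smul_smul₀ h]

/-- If `E = 0` and `p × k ≠ 0`, any angular momentum `j` can be cancelled by a suitable
boost `v` and translation `a`: the map `(a, v) ↦ a × p + v × k` is onto `ℝ³`. -/
theorem generic_massless_j_zero (p k j : Fin 3 → ℝ) (h : p ⨯₃ k ≠ 0) :
    ∃ v a : Fin 3 → ℝ, j + a ⨯₃ p + v ⨯₃ k = 0 := by
  obtain ⟨a, v, hav⟩ := exists_cross_add_cross_eq (mt dotProduct_self_eq_zero.mp h) (-j)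
  exact ⟨v, a, by rw [add_assoc, hav, add_neg_cancel]⟩
end

section
/- For each matrix [[a, b], [c, d]] ∈ GL(2, ℝ), the linear map on the Carroll Lie algebra defined by J_{ab} ↦ J_{ab}, B_i ↦ a B_i + b P_i, P_i ↦ c B_i + d P_i, H ↦ (ad − bc) H is a Lie algebra automorphism of the Carroll algebra. -/
open Matrix

/-- An element of the (3+1)-dimensional Carroll Lie algebra, written as
`(X, β, π, h)` with `X` the (skew-symmetric) rotation part `½ X^{ab} J_{ab}`,
`β` the boost part `β·B`, `π` the translation part `π·P` and `h` the coefficient of `H`. -/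
abbrev CarrollElt := Matrix (Fin 3) (Fin 3) ℝ × (Fin 3 → ℝ) × (Fin 3 → ℝ) × ℝ

/-- The Carroll Lie bracket, encoding the structure constants
`[J,J] = J`, `[J,B] = B`, `[J,P] = P`, `[B_a, P_b] = δ_{ab} H`. -/
def carrollBracket (A B : CarrollElt) : CarrollElt :=
  ⟨A.1 * B.1 - B.1 * A.1,
   A.1 *ᵥ B.2.1 - B.1 *ᵥ A.2.1,
   A.1 *ᵥ B.2.2.1 - B.1 *ᵥ A.2.2.1,
   A.2.1 ⬝ᵥ B.2.2.1 - B.2.1 ⬝ᵥ A.2.2.1⟩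

/-- The linear map determined by `J ↦ J`, `B ↦ a B + b P`, `P ↦ c B + d P`,
`H ↦ (ad − bc) H`. -/
def phiGL (a b c d : ℝ) (A : CarrollElt) : CarrollElt :=
  ⟨A.1, a • A.2.1 + c • A.2.2.1, b • A.2.1 + d • A.2.2.1, (a * d - b * c) * A.2.2.2⟩

/-!
`phiGL a b c d` fixes the rotations and mixes boosts and translations by the matrix
`[[a, b], [c, d]]`. Rotations act on `B` and `P` alike, so the `[J, B]` and `[J, P]` brackets are
preserved, while `[B, P]` is an antisymmetric bilinear pairing of the `(B, P)` pair and is therefore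
multiplied by the determinant, exactly as `H` is. Composition of these maps corresponds to matrix
multiplication, so the inverse matrix gives the inverse map.
-/

theorem isLinearMap_phiGL (a b c d : ℝ) : IsLinearMap ℝ (phiGL a b c d) where
  map_add A B := by
    simp only [phiGL, Prod.fst_add, Prod.snd_add, Prod.mk_add_mk, Prod.mk.injEq]
    exact ⟨trivial, by module, by module, by ring⟩
  map_smul r A := by
    simp only [phiGL, Prod.smul_fst, Prod.smul_snd, Prod.smul_mk, Prod.mk.injEq]
    exact ⟨trivial, by module, by module, by ring⟩

-- The parameter matrices multiply: `[[a', b'], [c', d']] * [[a, b], [c, d]]`.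
theorem phiGL_comp (a b c d a' b' c' d' : ℝ) (A : CarrollElt) :
    phiGL a b c d (phiGL a' b' c' d' A) =
      phiGL (a * a' + c * b') (b * a' + d * b') (a * c' + c * d') (b * c' + d * d') A := by
  simp only [phiGL, Prod.mk.injEq]
  exact ⟨trivial, by module, by module, by ring⟩

theorem phiGL_one_zero_zero_one : phiGL 1 0 0 1 = id := by
  funext A
  simp [phiGL]

theorem phiGL_bijective {a b c d : ℝ} (h : a * d - b * c ≠ 0) :
    Function.Bijective (phiGL a b c d) := by
  generalize hΔ : a * d - b * c = Δ at h
  rw [Function.bijective_iff_has_inverse]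
  refine ⟨phiGL (d / Δ) (-b / Δ) (-c / Δ) (a / Δ), fun A => ?_, fun A => ?_⟩ <;>
  · rw [phiGL_comp]
    convert congrFun phiGL_one_zero_zero_one A using 2 <;>
      first | rfl | (field_simp; subst hΔ; ring)

theorem phiGL_carrollBracket (a b c d : ℝ) (A B : CarrollElt) :
    phiGL a b c d (carrollBracket A B) =
      carrollBracket (phiGL a b c d A) (phiGL a b c d B) := by
  simp only [phiGL, carrollBracket, Prod.mk.injEq, mulVec_add, mulVec_smul, dotProduct_add,
    add_dotProduct, dotProduct_smul, smul_dotProduct, smul_eq_mul]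
  refine ⟨trivial, ?_, ?_, ?_⟩
  · module
  · module
  · rw [dotProduct_comm B.2.1 A.2.1, dotProduct_comm B.2.2.1 A.2.2.1,
      dotProduct_comm A.2.2.1 B.2.1, dotProduct_comm B.2.2.1 A.2.1]
    ring

/-- For `[[a,b],[c,d]] ∈ GL(2,ℝ)`, the map `phiGL a b c d` is a Lie algebra automorphism
of the Carroll algebra: it is linear, bijective, and preserves the bracket. -/
theorem phiGL_isAutomorphism (a b c d : ℝ) (h : a * d - b * c ≠ 0) :
    IsLinearMap ℝ (phiGL a b c d) ∧
    Function.Bijective (phiGL a b c d) ∧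
    (∀ A : CarrollElt, A.1ᵀ = -A.1 → (phiGL a b c d A).1ᵀ = -(phiGL a b c d A).1) ∧
    ∀ A B : CarrollElt, A.1ᵀ = -A.1 → B.1ᵀ = -B.1 →
      phiGL a b c d (carrollBracket A B) =
        carrollBracket (phiGL a b c d A) (phiGL a b c d B) :=
  ⟨isLinearMap_phiGL a b c d, phiGL_bijective h, fun _ hA => hA,
    fun A B _ _ => phiGL_carrollBracket a b c d A B⟩
end
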